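/- Assume char K = 2. Let κ be a plane external to the Klein quadric H₅ and let v be a point with v ≤ κ. Then the pencil L[v,κ] contains at least one line N with N ≤ π₅(N), i.e. there is a 2-dimensional subspace N with v ≤ N ≤ κ on which the polar form B vanishes identically (B(x,y) = 0 for all x,y ∈ N). In particular, in characteristic two every pencil of an hfd line set contains a line N with N ≤ π₅(N). -/

import Mathlib

/-- The Klein quadratic form on `K^6`. -/
def kleinQ {K : Type*} [Field K] (x : Fin 6 → K) : K :=
  x 0 * x 1 + x 2 * x 3 + x 4 * x 5

/-- The polar bilinear form `B(x,y) = Q(x+y) - Q(x) - Q(y)`. -/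
def kleinB {K : Type*} [Field K] (x y : Fin 6 → K) : K :=
  kleinQ (x + y) - kleinQ x - kleinQ y

/-- The polar subspace `π₅(S)` of a subspace `S`. -/
def kleinPolar {K : Type*} [Field K] (S : Submodule K (Fin 6 → K)) :
    Submodule K (Fin 6 → K) where
  carrier := {y | ∀ s ∈ S, kleinB s y = 0}
  add_mem' := by
    intro a b ha hb s hs
    have h1 := ha s hs
    have h2 := hb s hs
    simp only [kleinB, kleinQ, Pi.add_apply] at *
    linear_combination h1 + h2
  zero_mem' := by
    intro s hs
    simp [kleinB, kleinQ]
  smul_mem' := by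
    intro c a ha s hs
    have h1 := ha s hs
    simp only [kleinB, kleinQ, Pi.add_apply, Pi.smul_apply, smul_eq_mul] at *
    linear_combination c * h1

/-- `τ` is a tangent hyperplane of the Klein quadric. -/
def IsTangentHyperplane {K : Type*} [Field K] (τ : Submodule K (Fin 6 → K)) : Prop :=
  ∃ x : Fin 6 → K, x ≠ 0 ∧ kleinQ x = 0 ∧ τ = kleinPolar (Submodule.span K {x})

/-- A subspace is external to the Klein quadric. -/
def IsExternal {K : Type*} [Field K] (S : Submodule K (Fin 6 → K)) : Prop :=
  ∀ s ∈ S, s ≠ 0 → kleinQ s ≠ 0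

/-- A `0`-secant of the Klein quadric: an external line. -/
def IsSecant {K : Type*} [Field K] (G : Submodule K (Fin 6 → K)) : Prop :=
  Module.finrank K G = 2 ∧ IsExternal G

/-- The pencil of lines with vertex `v` and carrier plane `κ`. -/
def pencil {K : Type*} [Field K] (v κ : Submodule K (Fin 6 → K)) :
    Set (Submodule K (Fin 6 → K)) :=
  {X | Module.finrank K X = 2 ∧ v ≤ X ∧ X ≤ κ}

/-- An hfd line set: a set of `0`-secants such that every tangent hyperplane
contains exactly one member. -/
def IsHfd {K : Type*} [Field K] (H : Set (Submodule K (Fin 6 → K))) : Prop :=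
  (∀ G ∈ H, IsSecant G) ∧
    ∀ τ : Submodule K (Fin 6 → K), IsTangentHyperplane τ → ∃! G, G ∈ H ∧ G ≤ τ

/-- A pencilled hfd line set: every member lies in a pencil entirely contained in `H`. -/
def IsPencilledHfd {K : Type*} [Field K] (H : Set (Submodule K (Fin 6 → K))) : Prop :=
  IsHfd H ∧
    ∀ G ∈ H, ∃ v κ : Submodule K (Fin 6 → K), Module.finrank K v = 1 ∧
      Module.finrank K κ = 3 ∧ v ≤ κ ∧ pencil v κ ⊆ H ∧ G ∈ pencil v κ

/-- `v` is a vertex of the pencilled hfd line set `H`. -/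
def IsVertex {K : Type*} [Field K] (H : Set (Submodule K (Fin 6 → K)))
    (v : Submodule K (Fin 6 → K)) : Prop :=
  Module.finrank K v = 1 ∧ ∃ κ : Submodule K (Fin 6 → K),
    Module.finrank K κ = 3 ∧ v ≤ κ ∧ pencil v κ ⊆ H

/-- `κ` is a carrier plane of the pencilled hfd line set `H`. -/
def IsCarrier {K : Type*} [Field K] (H : Set (Submodule K (Fin 6 → K)))
    (κ : Submodule K (Fin 6 → K)) : Prop :=
  Module.finrank K κ = 3 ∧ ∃ v : Submodule K (Fin 6 → K),
    Module.finrank K v = 1 ∧ v ≤ κ ∧ pencil v κ ⊆ H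

/-!
In characteristic two the polar form of any quadratic form is alternating, since
`B(x, x) = 2 Q(x) = 0`. So every point `v` is orthogonal to itself. Also `κ ∩ v^⊥` has
dimension at least `3 - 1 = 2`, and so it contains a vector `w ∉ v`. Then `B` vanishes on
the line `v + ⟨w⟩`.
-/

namespace QuadraticMap

theorem polarBilin_isAlt_of_charTwo {R M : Type*} [CommRing R] [CharP R 2] [AddCommGroup M]
    [Module R M] (Q : QuadraticForm R M) : LinearMap.BilinForm.IsAlt (polarBilin Q) := fun x => by
  rw [polarBilin_apply_apply, polar_self, two_nsmul, CharTwo.add_self_eq_zero]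

end QuadraticMap

namespace LinearMap.BilinForm

variable {K V : Type*} [Field K] [AddCommGroup V] [Module K V] {B : LinearMap.BilinForm K V}

theorem IsAlt.sup_span_singleton_le_orthogonal (hB : B.IsAlt) {W : Submodule K V} {w : V}
    (hW : W ≤ B.orthogonal W) (hw : w ∈ B.orthogonal W) :
    W ⊔ K ∙ w ≤ B.orthogonal (W ⊔ K ∙ w) := by
  intro x hx
  rw [mem_orthogonal_iff]
  intro y hy
  obtain ⟨p, hp, _, hu, rfl⟩ := Submodule.mem_sup.mp hx
  obtain ⟨q, hq, _, hu', rfl⟩ := Submodule.mem_sup.mp hy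
  obtain ⟨a, rfl⟩ := Submodule.mem_span_singleton.mp hu
  obtain ⟨b, rfl⟩ := Submodule.mem_span_singleton.mp hu'
  have hqp : B q p = 0 := hW hp q hq
  have hqw : B q w = 0 := hw q hq
  have hwp : B w p = 0 := hB.eq_iff.mp (hw p hp)
  simp [hqp, hqw, hwp, hB.self_eq_zero]

theorem IsAlt.le_orthogonal_self_of_finrank_eq_one (hB : B.IsAlt) {W : Submodule K V}
    (hW : Module.finrank K W = 1) : W ≤ B.orthogonal W := by
  obtain ⟨w, hwW, hw0⟩ := Submodule.exists_mem_ne_zero_of_ne_bot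
    (p := W) (by rintro rfl; simp at hW)
  rw [eq_span_singleton_of_mem_of_finrank_eq_one hW hwW hw0, ← bot_sup_eq (K ∙ w)]
  exact hB.sup_span_singleton_le_orthogonal bot_le (by simp)

theorem finrank_le_finrank_inf_orthogonal_add [FiniteDimensional K V] (κ W : Submodule K V) :
    Module.finrank K κ ≤ Module.finrank K ↥(κ ⊓ B.orthogonal W) + Module.finrank K W := by
  have h₁ := finrank_add_finrank_orthogonal' (B := B) W
  have h₂ := Submodule.finrank_sup_add_finrank_inf_eq κ (B.orthogonal W)
  have h₃ := Submodule.finrank_le (κ ⊔ B.orthogonal W)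
  omega

theorem IsAlt.exists_finrank_succ_le_orthogonal_self (hB : B.IsAlt) [FiniteDimensional K V]
    {W κ : Submodule K V} (hWκ : W ≤ κ) (hW : W ≤ B.orthogonal W)
    (hdim : 2 * Module.finrank K W < Module.finrank K κ) :
    ∃ N : Submodule K V, Module.finrank K N = Module.finrank K W + 1 ∧
      W ≤ N ∧ N ≤ κ ∧ N ≤ B.orthogonal N := by
  have hrank := finrank_le_finrank_inf_orthogonal_add (B := B) κ W
  obtain ⟨w, ⟨hwκ, hwW⟩, hw⟩ := Set.not_subset.mp fun h : κ ⊓ B.orthogonal W ≤ W =>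
    by have := Submodule.finrank_mono h; omega
  exact ⟨W ⊔ K ∙ w, Submodule.finrank_sup_span_singleton hw, le_sup_left,
    sup_le hWκ ((Submodule.span_singleton_le_iff_mem w κ).mpr hwκ),
    hB.sup_span_singleton_le_orthogonal hW hwW⟩

end LinearMap.BilinForm

def kleinQuadraticForm (K : Type*) [Field K] : QuadraticForm K (Fin 6 → K) :=
  QuadraticMap.proj 0 1 + QuadraticMap.proj 2 3 + QuadraticMap.proj 4 5

theorem kleinPolar_eq_orthogonal {K : Type*} [Field K] (S : Submodule K (Fin 6 → K)) :
    kleinPolar S = LinearMap.BilinForm.orthogonal (kleinQuadraticForm K).polarBilin S := by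
  ext y
  simp [kleinPolar, kleinB, kleinQ, kleinQuadraticForm, QuadraticMap.polar]

theorem exists_selfPolar_mem_pencil {K : Type*} [Field K] [CharP K 2]
    {v κ : Submodule K (Fin 6 → K)} (hv : Module.finrank K v = 1)
    (hκ : Module.finrank K κ = 3) (hvκ : v ≤ κ) :
    ∃ N ∈ pencil v κ, N ≤ kleinPolar N := by
  have hB := (kleinQuadraticForm K).polarBilin_isAlt_of_charTwo
  obtain ⟨N, hN, hvN, hNκ, hNN⟩ := hB.exists_finrank_succ_le_orthogonal_self hvκ
    (hB.le_orthogonal_self_of_finrank_eq_one hv) (by omega)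
  exact ⟨N, ⟨by omega, hvN, hNκ⟩, (kleinPolar_eq_orthogonal N).symm ▸ hNN⟩

/-- In characteristic two, every pencil `L[v,κ]` with external carrier plane `κ`
contains a line `N` with `N ≤ π₅(N)`; in particular, every pencil of an hfd line
set contains such a line. -/
theorem char_two_pencil_has_selfpolar_line {K : Type*} [Field K] [CharP K 2] :
    (∀ κ v : Submodule K (Fin 6 → K), Module.finrank K κ = 3 → IsExternal κ →
      Module.finrank K v = 1 → v ≤ κ →
      ∃ N : Submodule K (Fin 6 → K), Module.finrank K N = 2 ∧
        v ≤ N ∧ N ≤ κ ∧ N ≤ kleinPolar N) ∧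
    (∀ H : Set (Submodule K (Fin 6 → K)), IsHfd H →
      ∀ v κ : Submodule K (Fin 6 → K), Module.finrank K v = 1 →
        Module.finrank K κ = 3 → v ≤ κ → pencil v κ ⊆ H →
        ∃ N ∈ pencil v κ, N ≤ kleinPolar N) := by
  constructor
  · intro κ v hκ _ hv hvκ
    obtain ⟨N, ⟨hN, hvN, hNκ⟩, hNN⟩ := exists_selfPolar_mem_pencil hv hκ hvκ
    exact ⟨N, hN, hvN, hNκ, hNN⟩
  · intro _ _ v κ hv hκ hvκ _
    exact exists_selfPolar_mem_pencil hv hκ hvκ
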